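/- For any q ≥ 2, t ≥ 0, and y ∈ ℝ, t^{q−2}·y² + |y|^q ≤ 2·γ_q(t, y) ≤ q·( t^{q−2}·y² + |y|^q ). -/

import Mathlib

/-- The smoothed `q`-norm function `γ_q(t,y)`. -/
noncomputable def gammaFn (q t y : ℝ) : ℝ :=
  if |y| ≤ t then (q / 2) * t ^ (q - 2) * y ^ 2
  else |y| ^ q + (q / 2 - 1) * t ^ q

/-!
Write `A = t^{q-2} y²` and `B = |y|^q = |y|^{q-2} y²`. Comparing `|y|^{q-2}` with `t^{q-2}` shows
that `B ≤ A` on the quadratic branch `|y| ≤ t`, where `2γ = qA`, and that `A ≤ B` and `t^q ≤ B`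
on the outer branch, where `2γ = 2B + (q - 2)t^q`. Both bounds then follow on each branch.
-/

open Real

lemma abs_rpow_eq_abs_rpow_sub_two_mul_sq (y : ℝ) {q : ℝ} (hq : q ≠ 0) :
    |y| ^ q = |y| ^ (q - 2) * y ^ 2 := by
  rw [← sq_abs y, ← rpow_natCast, ← rpow_add' (abs_nonneg y) (by simpa using hq)]
  norm_num

lemma abs_rpow_le_rpow_sub_two_mul_sq {q t y : ℝ} (hq : 2 ≤ q) (h : |y| ≤ t) :
    |y| ^ q ≤ t ^ (q - 2) * y ^ 2 := by
  rw [abs_rpow_eq_abs_rpow_sub_two_mul_sq y (by linarith)]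
  gcongr

lemma rpow_sub_two_mul_sq_le_abs_rpow {q t y : ℝ} (hq : 2 ≤ q) (ht : 0 ≤ t) (h : t ≤ |y|) :
    t ^ (q - 2) * y ^ 2 ≤ |y| ^ q := by
  rw [abs_rpow_eq_abs_rpow_sub_two_mul_sq y (by linarith)]
  gcongr

lemma two_mul_gammaFn_of_abs_le {q t y : ℝ} (h : |y| ≤ t) :
    2 * gammaFn q t y = q * (t ^ (q - 2) * y ^ 2) := by
  rw [gammaFn, if_pos h]
  ring

lemma two_mul_gammaFn_of_lt_abs {q t y : ℝ} (h : t < |y|) :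
    2 * gammaFn q t y = 2 * |y| ^ q + (q - 2) * t ^ q := by
  rw [gammaFn, if_neg h.not_ge]
  ring

/-- for any `q ≥ 2`, `t ≥ 0`, `y ∈ ℝ`:
`t^{q−2}y² + |y|^q ≤ 2γ_q(t,y) ≤ q(t^{q−2}y² + |y|^q)`. -/
theorem stmt11 (q t y : ℝ) (hq : 2 ≤ q) (ht : 0 ≤ t) :
    t ^ (q - 2) * y ^ 2 + |y| ^ q ≤ 2 * gammaFn q t y ∧
      2 * gammaFn q t y ≤ q * (t ^ (q - 2) * y ^ 2 + |y| ^ q) := by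
  have hA : 0 ≤ t ^ (q - 2) * y ^ 2 := by positivity
  have hB : 0 ≤ |y| ^ q := by positivity
  rcases le_or_gt |y| t with h | h
  · have hBA := abs_rpow_le_rpow_sub_two_mul_sq hq h
    rw [two_mul_gammaFn_of_abs_le h]
    constructor <;> nlinarith
  · have hAB := rpow_sub_two_mul_sq_le_abs_rpow hq ht h.le
    have htq : t ^ q ≤ |y| ^ q := by gcongr
    have htq0 : 0 ≤ t ^ q := by positivity
    rw [two_mul_gammaFn_of_lt_abs h]
    constructor <;> nlinarith
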